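/- Let T be an unrooted binary phylogenetic X-tree and let U be a 3-cuttable unrooted binary phylogenetic network on X that is not simple. Let e = {u,v} be a non-trivial cut-edge of U inducing the split X₁|X₂, and suppose T has an edge e' = {u',v'} inducing the same split X₁|X₂. Let U₁ and U₂ be obtained from U by deleting e and adding new leaf edges {u,x₁} and {v,x₂} with new labels x₁, x₂ ∉ X, and let T₁ and T₂ be obtained from T by deleting e' and adding new leaf edges {u',x₁} and {v',x₂}, where T₁ and U₁ have leaf set X₁∪{x₁} and T₂ and U₂ have leaf set X₂∪{x₂}. Then U displays T if and only if U₁ displays T₁ and U₂ displays T₂. -/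

import Mathlib

/-- A graph with an explicit vertex set inside an ambient type `V`. -/
structure Net (V : Type) where
  verts : Set V
  graph : SimpleGraph V
  support : ∀ ⦃a b : V⦄, graph.Adj a b → a ∈ verts ∧ b ∈ verts

namespace Net

variable {V : Type}

/-- The degree of a vertex. -/
noncomputable def deg (N : Net V) (v : V) : ℕ := (N.graph.neighborSet v).ncard

/-- `N` is connected (as a graph on its vertex set `N.verts`). -/
def ConnectedOn (N : Net V) : Prop :=
  N.verts.Nonempty ∧ ∀ a ∈ N.verts, ∀ b ∈ N.verts, N.graph.Reachable a b

/-- The set of leaves (degree-1 vertices). -/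
def leaves (N : Net V) : Set V := {v | v ∈ N.verts ∧ N.deg v = 1}

/-- `N` is an unrooted binary phylogenetic network on the (label) set `X`:
it is simple (automatic for `SimpleGraph`), connected, every vertex has degree 1 or 3,
and the degree-1 vertices are exactly the elements of `X` (we identify each leaf with
its label). -/
def IsUBPN (N : Net V) (X : Set V) : Prop :=
  N.ConnectedOn ∧ (∀ v ∈ N.verts, N.deg v = 1 ∨ N.deg v = 3) ∧ N.leaves = X

/-- Deleting a set of edges. -/
def deleteEdges (N : Net V) (D : Set (Sym2 V)) : Net V where
  verts := N.verts
  graph := N.graph.deleteEdges D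
  support := fun _ _ h => N.support ((SimpleGraph.deleteEdges_adj.mp h).1)

/-- A cut-edge: an edge whose deletion disconnects the network. -/
def IsCutEdge (N : Net V) (e : Sym2 V) : Prop :=
  e ∈ N.graph.edgeSet ∧ ¬ (N.deleteEdges {e}).ConnectedOn

/-- `N` is `q`-cuttable: every cycle contains a path of at least `q` vertices
each of which is incident to a cut-edge. -/
def QCuttable (N : Net V) (q : ℕ) : Prop :=
  ∀ ⦃r : V⦄ (C : N.graph.Walk r r), C.IsCycle →
    ∃ (x y : V) (P : N.graph.Walk x y), P.IsPath ∧ q ≤ P.support.length ∧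
      (∀ v ∈ P.support, v ∈ C.support) ∧ (∀ e ∈ P.edges, e ∈ C.edges) ∧
      ∀ v ∈ P.support, ∃ e, N.IsCutEdge e ∧ v ∈ e

end Net

namespace Net

variable {V : Type}

/-- The edge `e` of `N` induces the `X`-split `X₁ | X₂`: `(X₁, X₂)` is a partition of `X`
into two nonempty parts and every path in `N` between a leaf in `X₁` and a leaf in `X₂`
passes through `e`. -/
def InducesSplit (N : Net V) (X : Set V) (e : Sym2 V) (X₁ X₂ : Set V) : Prop :=
  X₁.Nonempty ∧ X₂.Nonempty ∧ X₁ ∩ X₂ = ∅ ∧ X₁ ∪ X₂ = X ∧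
  ∀ x ∈ X₁, ∀ y ∈ X₂, ∀ P : N.graph.Walk x y, P.IsPath → e ∈ P.edges

end Net

namespace Net

variable {V : Type}

/-- `T` is an unrooted binary phylogenetic `X`-tree: an unrooted binary phylogenetic
network on `X` with no cycles. -/
def IsTree (T : Net V) (X : Set V) : Prop := T.IsUBPN X ∧ T.graph.IsAcyclic

/-- `(fv, fe)` is an embedding of the tree `T` in the network `U` (both with label set
`X`): `fv` maps vertices of `T` to vertices of `U` fixing the leaves, injectively, and
`fe` maps each edge of `T` to a path in `U` between the images of its endpoints, the
paths of distinct edges being pairwise edge-disjoint. -/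
def IsEmbedding (T U : Net V) (X : Set V) (fv : V → V)
    (fe : ∀ ⦃a b : V⦄, T.graph.Adj a b → U.graph.Walk (fv a) (fv b)) : Prop :=
  (∀ a ∈ T.verts, fv a ∈ U.verts) ∧
  (∀ x ∈ X, fv x = x) ∧
  (∀ a ∈ T.verts, ∀ b ∈ T.verts, fv a = fv b → a = b) ∧
  (∀ ⦃a b : V⦄ (h : T.graph.Adj a b), (fe h).IsPath) ∧
  (∀ ⦃a b c d : V⦄ (h : T.graph.Adj a b) (h' : T.graph.Adj c d), s(a, b) ≠ s(c, d) →
    ∀ e ∈ (fe h).edges, e ∉ (fe h').edges)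

/-- `U` displays `T`: there is an embedding of `T` in `U` (equivalently, a subgraph of
`U` is a subdivision of `T`). -/
def Displays (U T : Net V) (X : Set V) : Prop :=
  ∃ (fv : V → V) (fe : ∀ ⦃a b : V⦄, T.graph.Adj a b → U.graph.Walk (fv a) (fv b)),
    IsEmbedding T U X fv fe

end Net

namespace Net

variable {V : Type}

/-- `N` is simple: every cut-edge of `N` is incident to a leaf. -/
def Simple (N : Net V) (X : Set V) : Prop :=
  ∀ e, N.IsCutEdge e → ∃ x ∈ X, x ∈ e

end Net

open Net

/-!
An embedding of `T` in `U` sends the `u'`-side of `T` into the `u`-side of `U`, and the path of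
`u'v'` is the only one that crosses the bridge `uv`. Cutting that path at `uv` splits an embedding
of `T` into embeddings of `T₁` and `T₂`, the pieces of the path becoming the paths of the new leaf
edges; conversely, embeddings of `T₁` and `T₂` glue along `uv` into an embedding of `T`.
-/

namespace SimpleGraph

variable {V : Type} {G : SimpleGraph V} {u v w x a b : V}

def side (G : SimpleGraph V) (u v : V) : Set V := {w | (G.deleteEdges {s(u, v)}).Reachable u w}

theorem self_mem_side : u ∈ G.side u v := Reachable.refl _

theorem mem_side_of_adj (ha : a ∈ G.side u v) (hab : G.Adj a b) (hne : s(a, b) ≠ s(u, v)) :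
    b ∈ G.side u v :=
  ha.trans (deleteEdges_adj.mpr ⟨hab, hne⟩).reachable

theorem mem_side_of_mem_support {p : G.Walk a b} (ha : a ∈ G.side u v) (hp : s(u, v) ∉ p.edges)
    (hw : w ∈ p.support) : w ∈ G.side u v := by
  classical
  exact ha.trans ⟨(p.toDeleteEdge _ hp).takeUntil w (by simpa using hw)⟩

theorem mem_side_iff_of_notMem_edges (p : G.Walk a b) (hp : s(u, v) ∉ p.edges) :
    a ∈ G.side u v ↔ b ∈ G.side u v := by
  have hab := reachable_deleteEdges_iff_exists_walk.mpr ⟨p, hp⟩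
  exact ⟨fun ha => ha.trans hab, fun hb => hb.trans hab.symm⟩

theorem reachable_deleteEdges_of_mem_side {e : Sym2 V} (hw : w ∈ G.side u v) (ha : a ∉ G.side u v)
    (hae : a ∈ e) : (G.deleteEdges {e}).Reachable u w := by
  classical
  obtain ⟨p⟩ := hw
  have hsub : ∀ f ∈ p.edges, f ∈ G.edgeSet := fun f hf =>
    (edgeSet_deleteEdges (G := G) _ ▸ p.edges_subset_edgeSet hf).1
  refine ⟨(p.transfer G hsub).toDeleteEdge e fun he => ha ?_⟩
  have hap : a ∈ p.support := by
    simpa using (p.transfer G hsub).mem_support_of_mem_edges he hae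
  exact ⟨p.takeUntil a hap⟩

theorem IsBridge.notMem_side_swap (hb : G.IsBridge s(u, v)) (hw : w ∈ G.side u v) :
    w ∉ G.side v u := by
  intro hw'
  rw [side, Set.mem_ofPred_eq, Sym2.eq_swap] at hw'
  exact hb (hw.trans hw'.symm)

theorem IsBridge.ne_of_mem_side (hb : G.IsBridge s(u, v)) (ha : a ∈ G.side u v)
    (hb' : b ∈ G.side u v) : s(a, b) ≠ s(u, v) := by
  intro he
  rcases Sym2.eq_iff.mp he with ⟨-, rfl⟩ | ⟨rfl, -⟩
  exacts [hb hb', hb ha]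

theorem IsBridge.swap_apply_of_mem_side [DecidableEq V] (hb : G.IsBridge s(u, v))
    (hw : w ∈ G.side u v) (hwx : w ≠ x) : Equiv.swap v x w = w :=
  Equiv.swap_apply_of_ne_of_ne (fun hwv => hb (hwv ▸ hw)) hwx

theorem mem_side_or_mem_side_swap (h : G.Reachable u w) : w ∈ G.side u v ∨ w ∈ G.side v u := by
  classical
  obtain ⟨p, hp⟩ := h.symm.exists_isPath
  by_cases he : s(u, v) ∈ p.edges
  · have hv := p.snd_mem_support_of_mem_edges he
    have hu := Walk.endpoint_notMem_support_takeUntil hp hv (p.adj_of_mem_edges he).ne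
    refine .inr (reachable_deleteEdges_iff_exists_walk.mpr ⟨(p.takeUntil v hv).reverse, ?_⟩)
    rw [Walk.edges_reverse, List.mem_reverse, Sym2.eq_swap]
    exact fun h => hu ((p.takeUntil v hv).fst_mem_support_of_mem_edges h)
  · exact .inl (reachable_deleteEdges_iff_exists_walk.mpr ⟨p.reverse, by simpa using he⟩)

theorem IsBridge.exists_walk_of_mem_edges (hb : G.IsBridge s(u, v)) :
    ∀ {a b : V} (p : G.Walk a b), a ∈ G.side u v → s(u, v) ∈ p.edges →
      ∃ q : G.Walk a u, s(u, v) ∉ q.edges ∧ q.edges ⊆ p.edges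
  | _, _, .nil, _, he => by simp at he
  | a, _, .cons (v := c) hac p, ha, he => by
    by_cases hs : s(a, c) = s(u, v)
    · rcases Sym2.eq_iff.mp hs with ⟨rfl, -⟩ | ⟨rfl, -⟩
      · exact ⟨.nil, by simp, by simp⟩
      · exact absurd ha hb
    · have he' : s(u, v) ∈ p.edges := by simpa [Ne.symm hs] using he
      obtain ⟨q, hq, hqp⟩ := hb.exists_walk_of_mem_edges p (mem_side_of_adj ha hac hs) he'
      refine ⟨.cons hac q, by simp [Ne.symm hs, hq], ?_⟩
      simpa using List.cons_subset_cons _ hqp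

theorem IsBridge.exists_isPath_of_mem_edges (hb : G.IsBridge s(u, v)) {p : G.Walk a b}
    (ha : a ∈ G.side u v) (he : s(u, v) ∈ p.edges) :
    ∃ q : G.Walk a u, q.IsPath ∧ s(u, v) ∉ q.edges ∧ q.edges ⊆ p.edges := by
  classical
  obtain ⟨q, hq, hqp⟩ := hb.exists_walk_of_mem_edges p ha he
  exact ⟨q.bypass, q.bypass_isPath, fun h => hq (q.edges_bypass_subset_edges h),
    fun f hf => hqp (q.edges_bypass_subset_edges hf)⟩

theorem Reachable.iff_of_forall_adj {P : V → Prop}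
    (hP : ∀ a b, G.Reachable u a → G.Adj a b → (P a ↔ P b)) (h : G.Reachable u w) :
    P u ↔ P w := by
  suffices ∀ {a} (q : G.Walk a w), G.Reachable u a → (P a ↔ P w) from h.elim (this · (.refl _))
  intro a q
  clear h
  induction q with
  | nil => exact fun _ => .rfl
  | cons hab q ih => exact fun ha => (hP _ _ ha hab).trans (ih (ha.trans hab.reachable))

theorem Walk.IsPath.notMem_support_of_subsingleton {p : G.Walk a b} (hp : p.IsPath)
    (hw : (G.neighborSet w).Subsingleton) (ha : w ≠ a) (hb : w ≠ b) : w ∉ p.support := by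
  induction p with
  | nil => simpa using ha
  | @cons a c b hac q ih =>
    rw [Walk.cons_isPath_iff] at hp
    rw [Walk.support_cons, List.mem_cons, not_or]
    refine ⟨ha, fun hwq => ?_⟩
    by_cases hwc : w = c
    · subst hwc
      cases q with
      | nil => exact hb rfl
      | @cons _ d _ hwd q =>
        have had : a = d := hw hac.symm hwd
        exact hp.2 (by simp [had])
    · exact ih hp.1 hwc hb hwq

theorem exists_neighborSet_subset_insert (G : SimpleGraph V) (e : Sym2 V) (w : V) :
    ∃ y, G.neighborSet w ⊆ insert y ((G.deleteEdges {e}).neighborSet w) := by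
  by_cases h : ∃ y, s(w, y) = e
  · obtain ⟨y, rfl⟩ := h
    refine ⟨y, fun t ht => ?_⟩
    by_cases hty : t = y
    · exact .inl hty
    · exact .inr (deleteEdges_adj.mpr ⟨ht, fun h => hty (Sym2.congr_right.mp h)⟩)
  · push Not at h
    exact ⟨w, fun t ht => .inr (deleteEdges_adj.mpr ⟨ht, by simpa using h t⟩)⟩

theorem ncard_neighborSet_le_deleteEdges [Finite V] (e : Sym2 V) (w : V) :
    (G.neighborSet w).ncard ≤ ((G.deleteEdges {e}).neighborSet w).ncard + 1 := by
  obtain ⟨y, hy⟩ := G.exists_neighborSet_subset_insert e w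
  exact (Set.ncard_le_ncard hy).trans (Set.ncard_insert_le _ _)

theorem neighborSet_deleteEdges_of_notMem {e : Sym2 V} (hw : w ∉ e) :
    (G.deleteEdges {e}).neighborSet w = G.neighborSet w := by
  ext t
  simp only [mem_neighborSet, deleteEdges_adj, Set.mem_singleton_iff, and_iff_left_iff_imp]
  exact fun _ h => hw (h ▸ Sym2.mem_mk_left w t)

theorem IsAcyclic.exists_subsingleton_neighborSet [Finite V] (hG : G.IsAcyclic) (h : G.Adj u v) :
    ∃ w, w ≠ u ∧ G.Reachable u w ∧ (G.neighborSet w).Subsingleton := by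
  have := Fintype.ofFinite V
  by_contra! hcon
  suffices ∀ n, ∃ (w : V) (p : G.Walk u w), p.IsPath ∧ n < p.length by
    obtain ⟨w, p, hp, hlen⟩ := this (Fintype.card V)
    exact absurd hp.length_lt (by omega)
  intro n
  induction n with
  | zero => exact ⟨v, .cons h .nil, by simp [h.ne], by simp⟩
  | succ n ih =>
    obtain ⟨w, p, hp, hlen⟩ := ih
    have hwu : w ≠ u := by
      rintro rfl
      simp [Walk.length_eq_zero_iff.mpr (Walk.isPath_iff_nil.mp hp)] at hlen
    -- in an acyclic graph, the only neighbour of `w` on `p` is its predecessor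
    obtain ⟨t, ht, htp⟩ : ∃ t, G.Adj w t ∧ t ∉ p.support := by
      obtain ⟨t₁, ht₁, t₂, ht₂, hne⟩ := hcon w hwu ⟨p⟩
      by_contra! hsupp
      exact hne ((hG.eq_penultimate_of_adj_end hp ht₁ (hsupp t₁ ht₁)).trans
        (hG.eq_penultimate_of_adj_end hp ht₂ (hsupp t₂ ht₂)).symm)
    exact ⟨t, p.concat ht, hp.concat htp ht, by rw [Walk.length_concat]; omega⟩

theorem IsBridge.exists_isPath_through (hb : G.IsBridge s(u, v)) (huv : G.Adj u v)
    {p : G.Walk a u} {q : G.Walk b v} (hp : p.IsPath) (hq : q.IsPath)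
    (hps : ∀ w ∈ p.support, w ∈ G.side u v) (hqs : ∀ w ∈ q.support, w ∈ G.side v u) :
    ∃ r : G.Walk a b, r.IsPath ∧ ∀ f ∈ r.edges, f ∈ p.edges ∨ f = s(u, v) ∨ f ∈ q.edges := by
  refine ⟨p.append (.cons huv q.reverse), ?_, fun f hf => by simpa using hf⟩
  rw [Walk.isPath_def, Walk.support_append, Walk.support_cons, List.tail_cons]
  refine List.nodup_append.mpr
    ⟨hp.support_nodup, hq.reverse.support_nodup, fun w hw w' hw' hww' => ?_⟩
  rw [Walk.support_reverse, List.mem_reverse] at hw'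
  exact hb.notMem_side_swap (hps w hw) (hww' ▸ hqs w' hw')

end SimpleGraph

namespace Net

open SimpleGraph

variable {V : Type} {N N₁ N₂ T U T₁ U₁ T₂ U₂ : Net V} {X X₁ X₂ : Set V}
  {u v u' v' x x₁ x₂ a b w : V} {e : Sym2 V}

theorem mem_verts_of_reachable {G : SimpleGraph V} (hG : G ≤ N.graph) (ha : a ∈ N.verts)
    (h : G.Reachable a b) : b ∈ N.verts := by
  obtain rfl | hab := eq_or_ne a b
  · exact ha
  · obtain ⟨p⟩ := h
    exact (N.support (hG (p.adj_penultimate (Walk.not_nil_of_ne hab)))).2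

theorem mem_verts_of_mem_support (ha : a ∈ N.verts) {p : N.graph.Walk a b} (hw : w ∈ p.support) :
    w ∈ N.verts := by
  classical
  exact mem_verts_of_reachable le_rfl ha ⟨p.takeUntil w hw⟩

theorem IsCutEdge.isBridge (hN : N.ConnectedOn) (he : N.IsCutEdge s(u, v)) :
    N.graph.IsBridge s(u, v) := by
  intro huv
  set H := N.graph.deleteEdges {s(u, v)}
  have hadj : ∀ c d, N.graph.Adj c d → H.Reachable c d := by
    intro c d hcd
    by_cases hs : s(c, d) = s(u, v)
    · rcases Sym2.eq_iff.mp hs with ⟨rfl, rfl⟩ | ⟨rfl, rfl⟩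
      exacts [huv, huv.symm]
    · exact (deleteEdges_adj.mpr ⟨hcd, hs⟩).reachable
  refine he.2 ⟨hN.1, fun a ha b hb => ?_⟩
  refine (Reachable.iff_of_forall_adj (P := (H.Reachable a ·)) (fun c d _ hcd => ?_)
    (hN.2 a ha b hb)).mp (.refl _)
  exact ⟨fun h => h.trans (hadj c d hcd), fun h => h.trans (hadj c d hcd).symm⟩

theorem IsUBPN.subset_verts (h : N.IsUBPN X) : X ⊆ N.verts :=
  h.2.2 ▸ fun _ hx => hx.1

theorem IsUBPN.deg_eq_three (h : N.IsUBPN X) (hw : w ∈ N.verts) (hwX : w ∉ X) : N.deg w = 3 :=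
  (h.2.1 w hw).resolve_left fun h1 => hwX (h.2.2 ▸ ⟨hw, h1⟩)

theorem ConnectedOn.mem_side_swap_iff (hN : N.ConnectedOn) (hb : N.graph.IsBridge s(u, v))
    (hu : u ∈ N.verts) (hw : w ∈ N.verts) : w ∈ N.graph.side v u ↔ w ∉ N.graph.side u v :=
  ⟨fun h h' => hb.notMem_side_swap h' h,
    (mem_side_or_mem_side_swap (hN.2 u hu w hw)).resolve_left⟩

theorem IsTree.isBridge (hT : T.IsTree X) (he : T.graph.Adj u v) : T.graph.IsBridge s(u, v) :=
  isAcyclic_iff_forall_adj_isBridge.mp hT.2 he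

/-- Otherwise every vertex of the component other than `u` would be inner, hence keep at least
two of its three neighbours, which is impossible in a finite forest. -/
theorem IsTree.exists_mem_reachable_deleteEdges [Finite V] (hT : T.IsTree X)
    (he : T.graph.Adj u v) (e : Sym2 V) :
    ∃ w ∈ X, ((T.graph.deleteEdges {s(u, v)}).deleteEdges {e}).Reachable u w := by
  set H := (T.graph.deleteEdges {s(u, v)}).deleteEdges {e}
  by_contra! hX
  have hdeg : ∀ w, H.Reachable u w → (T.graph.neighborSet w).ncard = 3 := fun w hw =>
    hT.1.deg_eq_three (mem_verts_of_reachable ((deleteEdges_le _).trans (deleteEdges_le _))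
      (T.support he).1 hw) fun hwX => hX w hwX hw
  obtain ⟨t, ht⟩ : (H.neighborSet u).Nonempty := by
    have := hdeg u (.refl _)
    have := ncard_neighborSet_le_deleteEdges (G := T.graph) s(u, v) u
    have : ((T.graph.deleteEdges {s(u, v)}).neighborSet u).ncard ≤
        (H.neighborSet u).ncard + 1 :=
      ncard_neighborSet_le_deleteEdges _ _
    exact Set.nonempty_of_ncard_ne_zero (by omega)
  have hH : H.IsAcyclic := hT.2.anti ((deleteEdges_le _).trans (deleteEdges_le _))
  obtain ⟨w, hwu, hw, hsub⟩ := hH.exists_subsingleton_neighborSet ht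
  have hwe : w ∉ s(u, v) := by
    rw [Sym2.mem_iff, not_or]
    exact ⟨hwu, by rintro rfl; exact hT.isBridge he (hw.mono (deleteEdges_le _))⟩
  have := hdeg w hw
  have : ((T.graph.deleteEdges {s(u, v)}).neighborSet w).ncard ≤ (H.neighborSet w).ncard + 1 :=
    ncard_neighborSet_le_deleteEdges _ _
  have := Set.ncard_le_one_iff_subsingleton.mpr hsub
  rw [neighborSet_deleteEdges_of_notMem hwe] at *
  omega

theorem InducesSplit.eq_sep_mem_side_swap (hsplit : N.InducesSplit X e X₁ X₂) (hT : T.IsTree X)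
    (he' : T.graph.Adj u' v') (hX₁ : ∀ x, x ∈ X₁ ↔ x ∈ X ∧ x ∈ T.graph.side u' v') :
    X₂ = {y ∈ X | y ∈ T.graph.side v' u'} := by
  obtain ⟨-, -, hdisj, hunion, -⟩ := hsplit
  ext y
  rw [Set.mem_sep_iff]
  constructor
  · intro hy
    have hyX : y ∈ X := hunion ▸ .inr hy
    refine ⟨hyX, (hT.1.1.mem_side_swap_iff (hT.isBridge he') (T.support he').1
      (hT.1.subset_verts hyX)).mpr fun hy' => ?_⟩
    exact (Set.eq_empty_iff_forall_notMem.mp hdisj) y ⟨(hX₁ y).mpr ⟨hyX, hy'⟩, hy⟩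
  · rintro ⟨hyX, hy⟩
    rcases hunion ▸ hyX with hy₁ | hy₂
    · exact absurd ((hX₁ y).mp hy₁).2 ((hT.isBridge he'.symm).notMem_side_swap hy)
    · exact hy₂

/-- `N₁` is the component of `u` in `N` minus the edge `uv`, with a new leaf `x` attached to `u`. -/
def IsSplitSide (N N₁ : Net V) (u v x : V) : Prop :=
  N₁.verts = {w ∈ N.verts | w ∈ N.graph.side u v} ∪ {x} ∧
  ∀ a b, N₁.graph.Adj a b ↔
    ((N.graph.Adj a b ∧ s(a, b) ≠ s(u, v) ∧ a ∈ N.graph.side u v ∧ b ∈ N.graph.side u v) ∨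
      (a = u ∧ b = x) ∨ (a = x ∧ b = u))

namespace IsSplitSide

variable (h : N.IsSplitSide N₁ u v x)
include h

theorem mem_verts_iff : w ∈ N₁.verts ↔ (w ∈ N.verts ∧ w ∈ N.graph.side u v) ∨ w = x := by
  rw [h.1]
  rfl

theorem new_mem_verts : x ∈ N₁.verts :=
  h.mem_verts_iff.mpr (.inr rfl)

theorem mem_side_of_mem_verts (hw : w ∈ N₁.verts) (hwx : w ≠ x) :
    w ∈ N.verts ∧ w ∈ N.graph.side u v :=
  (h.mem_verts_iff.mp hw).resolve_right hwx

theorem adj_new : N₁.graph.Adj u x :=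
  (h.2 u x).mpr (.inr (.inl ⟨rfl, rfl⟩))

theorem adj_of_adj (hab : N.graph.Adj a b) (hne : s(a, b) ≠ s(u, v)) (ha : a ∈ N.graph.side u v) :
    N₁.graph.Adj a b :=
  (h.2 a b).mpr (.inl ⟨hab, hne, ha, mem_side_of_adj ha hab hne⟩)

theorem adj_of_ne (hab : N₁.graph.Adj a b) (ha : a ≠ x) (hb : b ≠ x) :
    N.graph.Adj a b ∧ s(a, b) ≠ s(u, v) := by
  rcases (h.2 a b).mp hab with h' | ⟨-, rfl⟩ | ⟨rfl, -⟩
  exacts [⟨h'.1, h'.2.1⟩, absurd rfl hb, absurd rfl ha]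

theorem eq_of_adj_new (hx : x ∉ N.verts) (hw : N₁.graph.Adj x w) : w = u := by
  rcases (h.2 x w).mp hw with h' | ⟨rfl, rfl⟩ | ⟨-, rfl⟩
  exacts [absurd (N.support h'.1).1 hx, rfl, rfl]

theorem notMem_edgeSet (hv : v ∈ N.verts) (hx : x ∉ N.verts) : s(u, v) ∉ N₁.graph.edgeSet := by
  intro huv
  rcases (h.2 u v).mp huv with h' | ⟨-, rfl⟩ | ⟨rfl, rfl⟩
  exacts [h'.2.1 rfl, hx hv, hx hv]

theorem edges_subset_of_notMem_support {p : N₁.graph.Walk a b} (hp : x ∉ p.support) :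
    ∀ f ∈ p.edges, f ∈ N.graph.edgeSet := by
  intro f hf
  induction f using Sym2.ind with
  | _ c d =>
    refine (h.adj_of_ne (p.adj_of_mem_edges hf) ?_ ?_).1
    · exact fun hc => hp (hc ▸ p.fst_mem_support_of_mem_edges hf)
    · exact fun hd => hp (hd ▸ p.snd_mem_support_of_mem_edges hf)

theorem edges_subset_of_mem_side {p : N.graph.Walk a b} (ha : a ∈ N.graph.side u v)
    (hp : s(u, v) ∉ p.edges) : ∀ f ∈ p.edges, f ∈ N₁.graph.edgeSet := by
  intro f hf
  induction f using Sym2.ind with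
  | _ c d =>
    exact h.adj_of_adj (p.adj_of_mem_edges hf) (fun hcd => hp (hcd ▸ hf))
      (mem_side_of_mem_support ha hp (p.fst_mem_support_of_mem_edges hf))

theorem exists_isPath_of_isPath (hx : x ∉ N.verts) {p : N₁.graph.Walk a b} (hp : p.IsPath)
    (ha : a ≠ x) (hb : b ≠ x) : ∃ q : N.graph.Walk a b, q.IsPath ∧ q.edges = p.edges := by
  have hxp : x ∉ p.support := hp.notMem_support_of_subsingleton
    (fun _ h₁ _ h₂ => (h.eq_of_adj_new hx h₁).trans (h.eq_of_adj_new hx h₂).symm) ha.symm hb.symm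
  exact ⟨_, hp.transfer (h.edges_subset_of_notMem_support hxp), Walk.edges_transfer _ _⟩

theorem exists_isPath_to_new (hx : x ∉ N.verts) (ha : a ∈ N₁.verts) (hax : a ≠ x)
    {p : N₁.graph.Walk a x} (hp : p.IsPath) :
    ∃ q : N.graph.Walk a u, q.IsPath ∧ (∀ w ∈ q.support, w ∈ N.graph.side u v) ∧
      ∀ f ∈ q.edges, f ∈ p.edges := by
  have hnil : ¬ p.Nil := Walk.not_nil_of_ne hax
  have hpu : p.penultimate = u := h.eq_of_adj_new hx (p.adj_penultimate hnil).symm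
  have hxq : x ∉ p.dropLast.support := by
    have hnd := hp.support_nodup
    rw [← Walk.support_dropLast_concat hnil, List.nodup_append] at hnd
    exact fun hxq => hnd.2.2 x hxq x (List.mem_singleton_self x) rfl
  have hsub := h.edges_subset_of_notMem_support hxq
  refine ⟨(p.dropLast.transfer N.graph hsub).copy rfl hpu, ?_, fun w hw => ?_, fun f hf => ?_⟩
  · simpa using hp.dropLast.transfer hsub
  · rw [Walk.support_copy, Walk.support_transfer] at hw
    exact (h.mem_side_of_mem_verts (mem_verts_of_mem_support ha hw)
      (fun hwx => hxq (hwx ▸ hw))).2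
  · rw [Walk.edges_copy, Walk.edges_transfer, Walk.edges_dropLast] at hf
    exact List.dropLast_subset _ hf

theorem disjoint_edgeSet (h₂ : N.IsSplitSide N₂ v u x₂) (hb : N.graph.IsBridge s(u, v))
    (hx₂ : x₂ ∉ N.verts) : Disjoint N₁.graph.edgeSet N₂.graph.edgeSet := by
  have hcommon : ∀ w ∈ N₁.verts, w ∈ N₂.verts → w = x := by
    intro w hw₁ hw₂
    by_contra hwx
    obtain ⟨hwU, hw⟩ := h.mem_side_of_mem_verts hw₁ hwx
    rcases h₂.mem_verts_iff.mp hw₂ with ⟨-, hw'⟩ | rfl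
    exacts [hb.notMem_side_swap hw hw', hx₂ hwU]
  refine Set.disjoint_left.mpr fun f hf₁ hf₂ => ?_
  induction f using Sym2.ind with
  | _ c d =>
    obtain ⟨hc₁, hd₁⟩ := N₁.support hf₁
    obtain ⟨hc₂, hd₂⟩ := N₂.support hf₂
    exact (N₁.graph.ne_of_adj hf₁) ((hcommon c hc₁ hc₂).trans (hcommon d hd₁ hd₂).symm)

end IsSplitSide

def EdgeOnPath {fv : V → V} (fe : ∀ ⦃a b : V⦄, T.graph.Adj a b → U.graph.Walk (fv a) (fv b))
    (e f : Sym2 V) : Prop :=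
  ∃ a b, ∃ hab : T.graph.Adj a b, s(a, b) = e ∧ f ∈ (fe hab).edges

section EdgeOnPath

variable {fv : V → V} {fe : ∀ ⦃a b : V⦄, T.graph.Adj a b → U.graph.Walk (fv a) (fv b)}
  {e e' f : Sym2 V}

theorem edgeOnPath_of_mem (hab : T.graph.Adj a b) (hf : f ∈ (fe hab).edges) :
    EdgeOnPath fe s(a, b) f :=
  ⟨a, b, hab, rfl, hf⟩

theorem EdgeOnPath.mem_edgeSet (h : EdgeOnPath fe e f) : f ∈ U.graph.edgeSet := by
  obtain ⟨a, b, hab, -, hf⟩ := h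
  exact (fe hab).edges_subset_edgeSet hf

theorem IsEmbedding.eq_of_edgeOnPath (hemb : IsEmbedding T U X fv fe) (h : EdgeOnPath fe e f)
    (h' : EdgeOnPath fe e' f) : e = e' := by
  obtain ⟨a, b, hab, rfl, hf⟩ := h
  obtain ⟨c, d, hcd, rfl, hf'⟩ := h'
  by_contra hne
  exact hemb.2.2.2.2 hab hcd hne f hf hf'

theorem IsEmbedding.eq_of_glued_edgeOnPath {fv₁ fv₂ : V → V}
    {fe₁ : ∀ ⦃a b : V⦄, T₁.graph.Adj a b → U₁.graph.Walk (fv₁ a) (fv₁ b)}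
    {fe₂ : ∀ ⦃a b : V⦄, T₂.graph.Adj a b → U₂.graph.Walk (fv₂ a) (fv₂ b)}
    (hemb₁ : IsEmbedding T₁ U₁ X₁ fv₁ fe₁) (hemb₂ : IsEmbedding T₂ U₂ X₂ fv₂ fe₂)
    (hdisj : Disjoint U₁.graph.edgeSet U₂.graph.edgeSet) {E e₀ : Sym2 V}
    (hE₁ : E ∉ U₁.graph.edgeSet) (hE₂ : E ∉ U₂.graph.edgeSet) {τ₁ τ₂ : Sym2 V → Sym2 V}
    (hτ₁ : τ₁.Injective) (hτ₂ : τ₂.Injective)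
    (h : EdgeOnPath fe₁ (τ₁ e) f ∨ EdgeOnPath fe₂ (τ₂ e) f ∨ (f = E ∧ e = e₀))
    (h' : EdgeOnPath fe₁ (τ₁ e') f ∨ EdgeOnPath fe₂ (τ₂ e') f ∨ (f = E ∧ e' = e₀)) : e = e' := by
  rcases h with h₁ | h₂ | ⟨rfl, rfl⟩ <;> rcases h' with h₁' | h₂' | ⟨hf, rfl⟩
  · exact hτ₁ (hemb₁.eq_of_edgeOnPath h₁ h₁')
  · exact absurd h₂'.mem_edgeSet (Set.disjoint_left.mp hdisj h₁.mem_edgeSet)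
  · exact absurd (hf ▸ h₁.mem_edgeSet) hE₁
  · exact absurd h₂.mem_edgeSet (Set.disjoint_left.mp hdisj h₁'.mem_edgeSet)
  · exact hτ₂ (hemb₂.eq_of_edgeOnPath h₂ h₂')
  · exact absurd (hf ▸ h₂.mem_edgeSet) hE₂
  · exact absurd h₁'.mem_edgeSet hE₁
  · exact absurd h₂'.mem_edgeSet hE₂
  · rfl

end EdgeOnPath

theorem displays_of_forall_exists_isPath (fv : V → V) (L : Sym2 V → Sym2 V → Prop)
    (hL : ∀ {e e' f}, L e f → L e' f → e = e') (hverts : ∀ a ∈ T.verts, fv a ∈ U.verts)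
    (hfix : ∀ x ∈ X, fv x = x) (hinj : Set.InjOn fv T.verts)
    (hpath : ∀ a b, T.graph.Adj a b →
      ∃ w : U.graph.Walk (fv a) (fv b), w.IsPath ∧ ∀ f ∈ w.edges, L s(a, b) f) :
    U.Displays T X := by
  choose fe hfe using hpath
  exact ⟨fv, fun a b hab => fe a b hab, hverts, hfix, fun a ha b hb => hinj ha hb,
    fun a b hab => (hfe a b hab).1,
    fun a b c d hab hcd hne f hf hf' => hne (hL ((hfe a b hab).2 f hf) ((hfe c d hcd).2 f hf'))⟩

/-- The cut-edge `uv` of `U` and the edge `u'v'` of the tree `T` induce the same split of the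
leaves `X`, with `u` and `u'` on the same side. -/
structure CompatibleCuts (U T : Net V) (X : Set V) (u v u' v' : V) : Prop where
  isTree : T.IsTree X
  adj : U.graph.Adj u v
  isBridge : U.graph.IsBridge s(u, v)
  adj' : T.graph.Adj u' v'
  mem_side_iff : ∀ y ∈ X, y ∈ T.graph.side u' v' ↔ y ∈ U.graph.side u v
  mem_side_iff' : ∀ y ∈ X, y ∈ T.graph.side v' u' ↔ y ∈ U.graph.side v u
  exists_mem_side : ∃ y ∈ X, y ∈ T.graph.side u' v'
  exists_mem_side' : ∃ y ∈ X, y ∈ T.graph.side v' u'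

theorem CompatibleCuts.of_inducesSplit (hU : U.IsUBPN X) (hT : T.IsTree X)
    (he : U.IsCutEdge s(u, v)) (he' : T.graph.Adj u' v')
    (hsplit : U.InducesSplit X s(u, v) X₁ X₂)
    (hX₁U : ∀ x, x ∈ X₁ ↔ x ∈ X ∧ x ∈ U.graph.side u v)
    (hX₁T : ∀ x, x ∈ X₁ ↔ x ∈ X ∧ x ∈ T.graph.side u' v') :
    CompatibleCuts U T X u v u' v' := by
  have huv : U.graph.Adj u v := he.1
  have hside : ∀ y ∈ X, y ∈ T.graph.side u' v' ↔ y ∈ U.graph.side u v := fun y hy =>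
    and_congr_right_iff.mp ((hX₁T y).symm.trans (hX₁U y)) hy
  obtain ⟨y₂, hy₂⟩ := hsplit.2.1
  rw [hsplit.eq_sep_mem_side_swap hT he' hX₁T] at hy₂
  refine ⟨hT, huv, he.isBridge hU.1, he', hside, fun y hy => ?_, ?_, ⟨y₂, hy₂⟩⟩
  · rw [hT.1.1.mem_side_swap_iff (hT.isBridge he') (T.support he').1 (hT.1.subset_verts hy),
      hU.1.mem_side_swap_iff (he.isBridge hU.1) (U.support huv).1 (hU.subset_verts hy)]
    exact not_congr (hside y hy)
  · obtain ⟨y₁, hy₁⟩ := hsplit.1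
    exact ⟨y₁, (hX₁T y₁).mp hy₁⟩

namespace CompatibleCuts

variable (h : CompatibleCuts U T X u v u' v')
include h

theorem symm : CompatibleCuts U T X v u v' u' where
  isTree := h.isTree
  adj := h.adj.symm
  isBridge := by rw [Sym2.eq_swap]; exact h.isBridge
  adj' := h.adj'.symm
  mem_side_iff := h.mem_side_iff'
  mem_side_iff' := h.mem_side_iff
  exists_mem_side := h.exists_mem_side'
  exists_mem_side' := h.exists_mem_side

theorem isBridge' : T.graph.IsBridge s(u', v') :=
  h.isTree.isBridge h.adj'

theorem map_swap_adj' [DecidableEq V] (hxT : x ∉ T.verts) :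
    Sym2.map (Equiv.swap v' x) s(u', v') = s(u', x) := by
  rw [Sym2.map_mk, Equiv.swap_apply_left, h.isBridge'.swap_apply_of_mem_side self_mem_side
    fun hu'x : u' = x => hxT (hu'x ▸ (T.support h.adj').1)]

variable {fv : V → V} {fe : ∀ ⦃a b : V⦄, T.graph.Adj a b → U.graph.Walk (fv a) (fv b)}
  (hemb : IsEmbedding T U X fv fe)
include hemb

/-- If the path of an edge `ab` on the `u'`-side crossed `uv`, no other path would, so whether
`fv` lands on the `u`-side of `U` would be constant on the component of `u'` in `T - ab`. But
that component contains the leaves behind `v'` as well as a leaf on the `u'`-side. -/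
theorem notMem_edges_of_mem_side [Finite V] (hab : T.graph.Adj a b) (ha : a ∈ T.graph.side u' v')
    (hb : b ∈ T.graph.side u' v') : s(u, v) ∉ (fe hab).edges := by
  intro hcross
  set K := T.graph.deleteEdges {s(a, b)}
  have hK : ∀ w, K.Reachable u' w → (fv u' ∈ U.graph.side u v ↔ fv w ∈ U.graph.side u v) := by
    refine fun w hw => hw.iff_of_forall_adj (P := (fv · ∈ U.graph.side u v)) fun c d _ hcd => ?_
    obtain ⟨hcd, hne⟩ := deleteEdges_adj.mp hcd
    exact mem_side_iff_of_notMem_edges _ fun h' => hemb.2.2.2.2 hab hcd (Ne.symm hne) _ hcross h'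
  have hu' : fv u' ∉ U.graph.side u v := by
    obtain ⟨y, hyX, hy⟩ := h.exists_mem_side'
    have hu'v' : K.Adj u' v' :=
      deleteEdges_adj.mpr ⟨h.adj', (h.isBridge'.ne_of_mem_side ha hb).symm⟩
    have hyK : K.Reachable u' y := hu'v'.reachable.trans <|
      reachable_deleteEdges_of_mem_side hy (h.isBridge'.notMem_side_swap ha) (Sym2.mem_mk_left a b)
    rw [hK y hyK, hemb.2.1 y hyX]
    exact fun hyU => h.isBridge.notMem_side_swap hyU ((h.mem_side_iff' y hyX).mp hy)
  obtain ⟨w, hwX, hw⟩ := h.isTree.exists_mem_reachable_deleteEdges h.adj' s(a, b)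
  refine hu' ((hK w (hw.mono (deleteEdges_mono (deleteEdges_le _)))).mpr ?_)
  rw [hemb.2.1 w hwX]
  exact (h.mem_side_iff w hwX).mp (hw.mono (deleteEdges_le _))

theorem map_mem_side [Finite V] (ha : a ∈ T.graph.side u' v') :
    fv a ∈ U.graph.side u v := by
  obtain ⟨y, hyX, hy⟩ := h.exists_mem_side
  have hfy : fv y ∈ U.graph.side u v := by
    rw [hemb.2.1 y hyX]
    exact (h.mem_side_iff y hyX).mp hy
  refine ((hy.symm.trans ha).iff_of_forall_adj (P := (fv · ∈ U.graph.side u v))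
    (fun c d hc hcd => ?_)).mp hfy
  have hc' : c ∈ T.graph.side u' v' := hy.trans hc
  have hd' : d ∈ T.graph.side u' v' := hc'.trans hcd.reachable
  exact mem_side_iff_of_notMem_edges _
    (h.notMem_edges_of_mem_side hemb (deleteEdges_adj.mp hcd).1 hc' hd')

theorem mem_edges_adj' [Finite V] : s(u, v) ∈ (fe h.adj').edges := by
  by_contra hn
  have hu' := h.map_mem_side hemb self_mem_side
  have hv' := h.symm.map_mem_side hemb self_mem_side
  exact h.isBridge.notMem_side_swap ((mem_side_iff_of_notMem_edges _ hn).mp hu') hv'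

theorem exists_isPath_splitSide [Finite V] (hU₁ : U.IsSplitSide U₁ u v x) (hab : T.graph.Adj a b)
    (ha : a ∈ T.graph.side u' v') (hb : b ∈ T.graph.side u' v') :
    ∃ w : U₁.graph.Walk (fv a) (fv b), w.IsPath ∧ w.edges = (fe hab).edges := by
  have hsub := hU₁.edges_subset_of_mem_side (h.map_mem_side hemb ha)
    (h.notMem_edges_of_mem_side hemb hab ha hb)
  exact ⟨_, (hemb.2.2.2.1 hab).transfer hsub, Walk.edges_transfer _ _⟩

theorem exists_isPath_splitSide_new [Finite V] (hxU : x ∉ U.verts)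
    (hU₁ : U.IsSplitSide U₁ u v x) :
    ∃ w : U₁.graph.Walk (fv u') x, w.IsPath ∧
      ∀ f ∈ w.edges, EdgeOnPath fe s(u', v') f ∨ f = s(u, x) := by
  have hfu' := h.map_mem_side hemb self_mem_side
  obtain ⟨q, hq, hqe, hqp⟩ := h.isBridge.exists_isPath_of_mem_edges hfu' (h.mem_edges_adj' hemb)
  have hsub := hU₁.edges_subset_of_mem_side hfu' hqe
  have hxq : x ∉ (q.transfer U₁.graph hsub).support := by
    rw [Walk.support_transfer]
    exact fun hxq => hxU (mem_verts_of_mem_support (hemb.1 u' (T.support h.adj').1) hxq)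
  refine ⟨(q.transfer U₁.graph hsub).concat hU₁.adj_new,
    (hq.transfer hsub).concat hxq hU₁.adj_new, fun f hf => ?_⟩
  rw [Walk.edges_concat, List.concat_eq_append, List.mem_append, Walk.edges_transfer,
    List.mem_singleton] at hf
  exact hf.imp_left fun hf => edgeOnPath_of_mem h.adj' (hqp hf)

theorem exists_vertex_map_splitSide [Finite V] (hxU : x ∉ U.verts) (hxT : x ∉ T.verts)
    (hU₁ : U.IsSplitSide U₁ u v x) (hT₁ : T.IsSplitSide T₁ u' v' x) :
    ∃ fv₁ : V → V, (∀ a ∈ T.verts, fv₁ a = fv a) ∧ fv₁ x = x ∧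
      (∀ a ∈ T₁.verts, fv₁ a ∈ U₁.verts) ∧ (∀ y ∈ {y ∈ X | y ∈ T.graph.side u' v'} ∪ {x},
        fv₁ y = y) ∧ Set.InjOn fv₁ T₁.verts := by
  classical
  have hfv₁ : ∀ a ∈ T.verts, Function.update fv x x a = fv a := fun a ha =>
    Function.update_of_ne (fun hax : a = x => hxT (hax ▸ ha)) _ _
  have hfx : Function.update fv x x x = x := Function.update_self _ _ _
  refine ⟨_, hfv₁, hfx, fun a ha => ?_, ?_, fun a ha b hb hab => ?_⟩
  · rcases hT₁.mem_verts_iff.mp ha with ⟨haT, has⟩ | rfl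
    · exact hfv₁ a haT ▸ hU₁.mem_verts_iff.mpr (.inl ⟨hemb.1 a haT, h.map_mem_side hemb has⟩)
    · rw [hfx]
      exact hU₁.new_mem_verts
  · rintro y (⟨hyX, -⟩ | rfl)
    · exact (hfv₁ y (h.isTree.1.subset_verts hyX)).trans (hemb.2.1 y hyX)
    · exact hfx
  · rcases hT₁.mem_verts_iff.mp ha with ⟨haT, -⟩ | rfl <;>
      rcases hT₁.mem_verts_iff.mp hb with ⟨hbT, -⟩ | rfl
    · rw [hfv₁ a haT, hfv₁ b hbT] at hab
      exact hemb.2.2.1 a haT b hbT hab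
    · rw [hfv₁ a haT, hfx] at hab
      exact absurd (hab ▸ hemb.1 a haT) hxU
    · rw [hfv₁ b hbT, hfx] at hab
      exact absurd (hab ▸ hemb.1 b hbT) hxU
    · rfl

/-- The swap `v' ↔ x` matches the edges of `T₁` with those of `T`. -/
theorem displays_splitSide [Finite V] (hxU : x ∉ U.verts) (hxT : x ∉ T.verts)
    (hU₁ : U.IsSplitSide U₁ u v x) (hT₁ : T.IsSplitSide T₁ u' v' x) :
    U₁.Displays T₁ ({y ∈ X | y ∈ T.graph.side u' v'} ∪ {x}) := by
  classical
  obtain ⟨fv₁, hfv₁, hfx, hverts, hfix, hinj⟩ :=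
    h.exists_vertex_map_splitSide hemb hxU hxT hU₁ hT₁
  set σ := Equiv.swap v' x
  have hσ : ∀ a ∈ T.verts, a ∈ T.graph.side u' v' → σ a = a := fun a ha has =>
    h.isBridge'.swap_apply_of_mem_side has fun hax => hxT (hax ▸ ha)
  have hσu' : Sym2.map σ s(u', x) = s(u', v') := by
    rw [Sym2.map_mk, hσ u' (T.support h.adj').1 self_mem_side, Equiv.swap_apply_right]
  have hxu' : s(x, u') = s(u', x) := Sym2.eq_swap
  obtain ⟨w, hw, hwe⟩ := h.exists_isPath_splitSide_new hemb hxU hU₁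
  refine displays_of_forall_exists_isPath fv₁
    (fun e f => EdgeOnPath fe (Sym2.map σ e) f ∨ (f = s(u, x) ∧ e = s(u', x)))
    ?_ hverts hfix hinj fun a b hab => ?_
  · rintro e e' f (h₁ | ⟨rfl, rfl⟩) (h₂ | ⟨hf, rfl⟩)
    · exact Sym2.map.injective σ.injective (hemb.eq_of_edgeOnPath h₁ h₂)
    · exact absurd (hf ▸ h₁.mem_edgeSet) fun h' => hxU (U.support h').2
    · exact absurd h₂.mem_edgeSet fun h' => hxU (U.support h').2
    · rfl
  rcases (hT₁.2 a b).mp hab with ⟨hab, -, ha, hb⟩ | ⟨rfl, rfl⟩ | ⟨rfl, rfl⟩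
  · obtain ⟨haT, hbT⟩ := T.support hab
    obtain ⟨w', hw', hw'e⟩ := h.exists_isPath_splitSide hemb hU₁ hab ha hb
    refine ⟨w'.copy (hfv₁ a haT).symm (hfv₁ b hbT).symm, by simpa using hw', fun f hf => .inl ?_⟩
    rw [Sym2.map_mk, hσ a haT ha, hσ b hbT hb]
    exact edgeOnPath_of_mem hab (hw'e ▸ by simpa using hf)
  · refine ⟨w.copy (hfv₁ a (T.support h.adj').1).symm hfx.symm, by simpa using hw, fun f hf => ?_⟩
    exact (hwe f (by simpa using hf)).imp (hσu' ▸ ·) (⟨·, rfl⟩)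
  · refine ⟨(w.copy (hfv₁ b (T.support h.adj').1).symm hfx.symm).reverse, by simpa using hw,
      fun f hf => ?_⟩
    rw [hxu']
    exact (hwe f (by simpa using hf)).imp (hσu' ▸ ·) (⟨·, rfl⟩)

end CompatibleCuts

namespace IsEmbedding

variable {fv₁ : V → V} {fe₁ : ∀ ⦃a b : V⦄, T₁.graph.Adj a b → U₁.graph.Walk (fv₁ a) (fv₁ b)}
  (hemb₁ : IsEmbedding T₁ U₁ X₁ fv₁ fe₁) (hT₁ : T.IsSplitSide T₁ u' v' x) (hfx : fv₁ x = x)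
include hemb₁ hT₁ hfx

theorem map_ne_new (ha : a ∈ T₁.verts) (hax : a ≠ x) : fv₁ a ≠ x :=
  fun h => hax (hemb₁.2.2.1 a ha x hT₁.new_mem_verts (h.trans hfx.symm))

variable (hU₁ : U.IsSplitSide U₁ u v x)
include hU₁

theorem map_mem_side_of_isSplitSide (hxT : x ∉ T.verts) (ha : a ∈ T.verts)
    (has : a ∈ T.graph.side u' v') : fv₁ a ∈ U.verts ∧ fv₁ a ∈ U.graph.side u v := by
  have ha₁ : a ∈ T₁.verts := hT₁.mem_verts_iff.mpr (.inl ⟨ha, has⟩)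
  exact hU₁.mem_side_of_mem_verts (hemb₁.1 a ha₁)
    (hemb₁.map_ne_new hT₁ hfx ha₁ fun hax => hxT (hax ▸ ha))

theorem exists_isPath_of_mem_side [DecidableEq V] (hxU : x ∉ U.verts) (hxT : x ∉ T.verts)
    (hbr : T.graph.IsBridge s(u', v')) (hab : T.graph.Adj a b)
    (ha : a ∈ T.graph.side u' v') (hb : b ∈ T.graph.side u' v') :
    ∃ w : U.graph.Walk (fv₁ a) (fv₁ b), w.IsPath ∧
      ∀ f ∈ w.edges, EdgeOnPath fe₁ (Sym2.map (Equiv.swap v' x) s(a, b)) f := by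
  obtain ⟨haT, hbT⟩ := T.support hab
  have h₁ : T₁.graph.Adj a b := hT₁.adj_of_adj hab (hbr.ne_of_mem_side ha hb) ha
  obtain ⟨ha₁, hb₁⟩ := T₁.support h₁
  obtain ⟨w, hw, hwe⟩ := hU₁.exists_isPath_of_isPath hxU (hemb₁.2.2.2.1 h₁)
    (hemb₁.map_ne_new hT₁ hfx ha₁ fun hax => hxT (hax ▸ haT))
    (hemb₁.map_ne_new hT₁ hfx hb₁ fun hbx => hxT (hbx ▸ hbT))
  refine ⟨w, hw, fun f hf => ?_⟩
  rw [Sym2.map_mk, hbr.swap_apply_of_mem_side ha fun hax : a = x => hxT (hax ▸ haT),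
    hbr.swap_apply_of_mem_side hb fun hbx : b = x => hxT (hbx ▸ hbT)]
  exact edgeOnPath_of_mem h₁ (hwe ▸ hf)

theorem exists_isPath_to (hxU : x ∉ U.verts) :
    ∃ q : U.graph.Walk (fv₁ u') u, q.IsPath ∧ (∀ w ∈ q.support, w ∈ U.graph.side u v) ∧
      ∀ f ∈ q.edges, EdgeOnPath fe₁ s(u', x) f := by
  have hu' := (T₁.support hT₁.adj_new).1
  obtain ⟨q, hq, hqs, hqe⟩ := hU₁.exists_isPath_to_new hxU (hemb₁.1 u' hu')
    (hemb₁.map_ne_new hT₁ hfx hu' hT₁.adj_new.ne)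
    (p := (fe₁ hT₁.adj_new).copy rfl hfx) (by simpa using hemb₁.2.2.2.1 hT₁.adj_new)
  exact ⟨q, hq, hqs, fun f hf => edgeOnPath_of_mem _ (by simpa using hqe f hf)⟩

end IsEmbedding

namespace CompatibleCuts

theorem exists_vertex_map (h : CompatibleCuts U T X u v u' v') {fv₁ fv₂ : V → V}
    (hmem₁ : ∀ a ∈ T.verts, a ∈ T.graph.side u' v' → fv₁ a ∈ U.verts ∧ fv₁ a ∈ U.graph.side u v)
    (hmem₂ : ∀ a ∈ T.verts, a ∈ T.graph.side v' u' → fv₂ a ∈ U.verts ∧ fv₂ a ∈ U.graph.side v u)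
    (hfix₁ : ∀ y ∈ X, y ∈ T.graph.side u' v' → fv₁ y = y)
    (hfix₂ : ∀ y ∈ X, y ∈ T.graph.side v' u' → fv₂ y = y)
    (hinj₁ : Set.InjOn fv₁ {a ∈ T.verts | a ∈ T.graph.side u' v'})
    (hinj₂ : Set.InjOn fv₂ {a ∈ T.verts | a ∈ T.graph.side v' u'}) :
    ∃ fv : V → V, (∀ a ∈ T.graph.side u' v', fv a = fv₁ a) ∧
      (∀ a ∈ T.graph.side v' u', fv a = fv₂ a) ∧ (∀ a ∈ T.verts, fv a ∈ U.verts) ∧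
      (∀ y ∈ X, fv y = y) ∧ Set.InjOn fv T.verts := by
  classical
  have hside : ∀ a ∈ T.verts, a ∈ T.graph.side u' v' ∨ a ∈ T.graph.side v' u' := fun a ha =>
    mem_side_or_mem_side_swap (h.isTree.1.1.2 u' (T.support h.adj').1 a ha)
  have hfv₁ : ∀ a ∈ T.graph.side u' v', (T.graph.side u' v').piecewise fv₁ fv₂ a = fv₁ a :=
    fun a ha => Set.piecewise_eq_of_mem _ _ _ ha
  have hfv₂ : ∀ a ∈ T.graph.side v' u', (T.graph.side u' v').piecewise fv₁ fv₂ a = fv₂ a :=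
    fun a ha => Set.piecewise_eq_of_notMem _ _ _ fun ha' => h.isBridge'.notMem_side_swap ha' ha
  refine ⟨_, hfv₁, hfv₂, fun a ha => ?_, fun y hy => ?_, fun a ha b hb hab => ?_⟩
  · rcases hside a ha with has | has
    · exact hfv₁ a has ▸ (hmem₁ a ha has).1
    · exact hfv₂ a has ▸ (hmem₂ a ha has).1
  · rcases hside y (h.isTree.1.subset_verts hy) with hys | hys
    · exact (hfv₁ y hys).trans (hfix₁ y hy hys)
    · exact (hfv₂ y hys).trans (hfix₂ y hy hys)
  · rcases hside a ha with has | has <;> rcases hside b hb with hbs | hbs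
    · rw [hfv₁ a has, hfv₁ b hbs] at hab
      exact hinj₁ ⟨ha, has⟩ ⟨hb, hbs⟩ hab
    · rw [hfv₁ a has, hfv₂ b hbs] at hab
      exact absurd (hmem₂ b hb hbs).2 (h.isBridge.notMem_side_swap (hab ▸ (hmem₁ a ha has).2))
    · rw [hfv₂ a has, hfv₁ b hbs] at hab
      exact absurd (hmem₂ a ha has).2 (h.isBridge.notMem_side_swap (hab ▸ (hmem₁ b hb hbs).2))
    · rw [hfv₂ a has, hfv₂ b hbs] at hab
      exact hinj₂ ⟨ha, has⟩ ⟨hb, hbs⟩ hab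

/-- The edge `u'v'` is sent along the path of `u'x₁` up to `u`, across `uv`, and back along the
path of `v'x₂`; the swaps `v' ↔ x₁` and `u' ↔ x₂` match the edges of `T` with those of `T₁`
and `T₂`. -/
theorem displays_of_displays_splitSides (h : CompatibleCuts U T X u v u' v')
    (hx₁U : x₁ ∉ U.verts) (hx₁T : x₁ ∉ T.verts) (hx₂U : x₂ ∉ U.verts) (hx₂T : x₂ ∉ T.verts)
    (hU₁ : U.IsSplitSide U₁ u v x₁) (hT₁ : T.IsSplitSide T₁ u' v' x₁)
    (hU₂ : U.IsSplitSide U₂ v u x₂) (hT₂ : T.IsSplitSide T₂ v' u' x₂)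
    (h₁ : U₁.Displays T₁ ({y ∈ X | y ∈ T.graph.side u' v'} ∪ {x₁}))
    (h₂ : U₂.Displays T₂ ({y ∈ X | y ∈ T.graph.side v' u'} ∪ {x₂})) : U.Displays T X := by
  classical
  obtain ⟨fv₁, fe₁, hemb₁⟩ := h₁
  obtain ⟨fv₂, fe₂, hemb₂⟩ := h₂
  have hfx₁ : fv₁ x₁ = x₁ := hemb₁.2.1 x₁ (.inr rfl)
  have hfx₂ : fv₂ x₂ = x₂ := hemb₂.2.1 x₂ (.inr rfl)
  obtain ⟨fv, hfv₁, hfv₂, hverts, hfix, hinj⟩ := h.exists_vertex_map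
    (fun _ => hemb₁.map_mem_side_of_isSplitSide hT₁ hfx₁ hU₁ hx₁T)
    (fun _ => hemb₂.map_mem_side_of_isSplitSide hT₂ hfx₂ hU₂ hx₂T)
    (fun y hy hys => hemb₁.2.1 y (.inl ⟨hy, hys⟩)) (fun y hy hys => hemb₂.2.1 y (.inl ⟨hy, hys⟩))
    (fun a ha b hb => hemb₁.2.2.1 a (hT₁.mem_verts_iff.mpr (.inl ha)) b
      (hT₁.mem_verts_iff.mpr (.inl hb)))
    (fun a ha b hb => hemb₂.2.2.1 a (hT₂.mem_verts_iff.mpr (.inl ha)) b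
      (hT₂.mem_verts_iff.mpr (.inl hb)))
  set L : Sym2 V → Sym2 V → Prop := fun e f =>
    EdgeOnPath fe₁ (Sym2.map (Equiv.swap v' x₁) e) f ∨
      EdgeOnPath fe₂ (Sym2.map (Equiv.swap u' x₂) e) f ∨ (f = s(u, v) ∧ e = s(u', v'))
  have hW : ∃ W : U.graph.Walk (fv u') (fv v'), W.IsPath ∧ ∀ f ∈ W.edges, L s(u', v') f := by
    have hτ₂ : Sym2.map (Equiv.swap u' x₂) s(u', v') = s(v', x₂) :=
      Sym2.eq_swap (a := v') ▸ h.symm.map_swap_adj' hx₂T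
    obtain ⟨Q₁, hQ₁, hQ₁s, hQ₁e⟩ := hemb₁.exists_isPath_to hT₁ hfx₁ hU₁ hx₁U
    obtain ⟨Q₂, hQ₂, hQ₂s, hQ₂e⟩ := hemb₂.exists_isPath_to hT₂ hfx₂ hU₂ hx₂U
    obtain ⟨W, hW, hWe⟩ := h.isBridge.exists_isPath_through h.adj hQ₁ hQ₂ hQ₁s hQ₂s
    refine ⟨W.copy (hfv₁ u' self_mem_side).symm (hfv₂ v' self_mem_side).symm, by simpa using hW,
      fun f hf => ?_⟩
    rcases hWe f (by simpa using hf) with hf | hf | hf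
    · exact .inl (h.map_swap_adj' hx₁T ▸ hQ₁e f hf)
    · exact .inr (.inr ⟨hf, rfl⟩)
    · exact .inr (.inl (hτ₂ ▸ hQ₂e f hf))
  have huv₁ : s(u, v) ∉ U₁.graph.edgeSet := hU₁.notMem_edgeSet (U.support h.adj).2 hx₁U
  have huv₂ : s(u, v) ∉ U₂.graph.edgeSet :=
    Sym2.eq_swap (a := v) ▸ hU₂.notMem_edgeSet (U.support h.adj).1 hx₂U
  refine displays_of_forall_exists_isPath fv L (hemb₁.eq_of_glued_edgeOnPath hemb₂
    (hU₁.disjoint_edgeSet hU₂ h.isBridge hx₂U) huv₁ huv₂ (Sym2.map.injective (Equiv.injective _))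
    (Sym2.map.injective (Equiv.injective _))) hverts hfix hinj fun a b hab => ?_
  by_cases he : s(a, b) = s(u', v')
  · rcases Sym2.eq_iff.mp he with ⟨rfl, rfl⟩ | ⟨rfl, rfl⟩
    · exact hW
    · obtain ⟨W, hW, hWe⟩ := hW
      refine ⟨W.reverse, hW.reverse, fun f hf => ?_⟩
      rw [Sym2.eq_swap]
      exact hWe f (by simpa using hf)
  rcases mem_side_or_mem_side_swap (h.isTree.1.1.2 u' (T.support h.adj').1 a (T.support hab).1)
    with has | has
  · have hbs := mem_side_of_adj has hab he
    obtain ⟨w, hw, hwe⟩ := hemb₁.exists_isPath_of_mem_side hT₁ hfx₁ hU₁ hx₁U hx₁T h.isBridge'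
      hab has hbs
    exact ⟨w.copy (hfv₁ a has).symm (hfv₁ b hbs).symm, by simpa using hw,
      fun f hf => .inl (hwe f (by simpa using hf))⟩
  · have hbs := mem_side_of_adj has hab (Sym2.eq_swap (a := v') ▸ he)
    obtain ⟨w, hw, hwe⟩ := hemb₂.exists_isPath_of_mem_side hT₂ hfx₂ hU₂ hx₂U hx₂T
      h.symm.isBridge' hab has hbs
    exact ⟨w.copy (hfv₂ a has).symm (hfv₂ b hbs).symm, by simpa using hw,
      fun f hf => .inr (.inl (hwe f (by simpa using hf)))⟩

end CompatibleCuts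

end Net

theorem branching_operation_displays_general {V : Type} [Fintype V]
    (U T : Net V) (X : Set V) (hU : U.IsUBPN X)
    (hT : T.IsTree X)
    (u v : V) (he : U.IsCutEdge s(u, v))
    (X₁ X₂ : Set V) (hsplit : U.InducesSplit X s(u, v) X₁ X₂)
    (hX₁U : ∀ x, x ∈ X₁ ↔ x ∈ X ∧ (U.graph.deleteEdges {s(u, v)}).Reachable u x)
    (u' v' : V) (he' : T.graph.Adj u' v')
    (hX₁T : ∀ x, x ∈ X₁ ↔ x ∈ X ∧ (T.graph.deleteEdges {s(u', v')}).Reachable u' x)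
    (x₁ x₂ : V) (hx₁ : x₁ ∉ U.verts ∪ T.verts) (hx₂ : x₂ ∉ U.verts ∪ T.verts)
    (U₁ U₂ T₁ T₂ : Net V)
    (hU₁v : U₁.verts =
      {w ∈ U.verts | (U.graph.deleteEdges {s(u, v)}).Reachable u w} ∪ {x₁})
    (hU₁a : ∀ a b, U₁.graph.Adj a b ↔
      ((U.graph.Adj a b ∧ s(a, b) ≠ s(u, v) ∧
        (U.graph.deleteEdges {s(u, v)}).Reachable u a ∧
        (U.graph.deleteEdges {s(u, v)}).Reachable u b) ∨
       (a = u ∧ b = x₁) ∨ (a = x₁ ∧ b = u)))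
    (hU₂v : U₂.verts =
      {w ∈ U.verts | (U.graph.deleteEdges {s(u, v)}).Reachable v w} ∪ {x₂})
    (hU₂a : ∀ a b, U₂.graph.Adj a b ↔
      ((U.graph.Adj a b ∧ s(a, b) ≠ s(u, v) ∧
        (U.graph.deleteEdges {s(u, v)}).Reachable v a ∧
        (U.graph.deleteEdges {s(u, v)}).Reachable v b) ∨
       (a = v ∧ b = x₂) ∨ (a = x₂ ∧ b = v)))
    (hT₁v : T₁.verts =
      {w ∈ T.verts | (T.graph.deleteEdges {s(u', v')}).Reachable u' w} ∪ {x₁})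
    (hT₁a : ∀ a b, T₁.graph.Adj a b ↔
      ((T.graph.Adj a b ∧ s(a, b) ≠ s(u', v') ∧
        (T.graph.deleteEdges {s(u', v')}).Reachable u' a ∧
        (T.graph.deleteEdges {s(u', v')}).Reachable u' b) ∨
       (a = u' ∧ b = x₁) ∨ (a = x₁ ∧ b = u')))
    (hT₂v : T₂.verts =
      {w ∈ T.verts | (T.graph.deleteEdges {s(u', v')}).Reachable v' w} ∪ {x₂})
    (hT₂a : ∀ a b, T₂.graph.Adj a b ↔
      ((T.graph.Adj a b ∧ s(a, b) ≠ s(u', v') ∧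
        (T.graph.deleteEdges {s(u', v')}).Reachable v' a ∧
        (T.graph.deleteEdges {s(u', v')}).Reachable v' b) ∨
       (a = v' ∧ b = x₂) ∨ (a = x₂ ∧ b = v'))) :
    U.Displays T X ↔
      (U₁.Displays T₁ (X₁ ∪ {x₁}) ∧ U₂.Displays T₂ (X₂ ∪ {x₂})) := by
  have hS := CompatibleCuts.of_inducesSplit hU hT he he' hsplit hX₁U hX₁T
  have hU₁ : U.IsSplitSide U₁ u v x₁ := ⟨hU₁v, hU₁a⟩
  have hT₁ : T.IsSplitSide T₁ u' v' x₁ := ⟨hT₁v, hT₁a⟩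
  have hU₂ : U.IsSplitSide U₂ v u x₂ := by
    simp only [IsSplitSide, SimpleGraph.side, Sym2.eq_swap (a := v), Set.mem_ofPred_eq]
    exact ⟨hU₂v, hU₂a⟩
  have hT₂ : T.IsSplitSide T₂ v' u' x₂ := by
    simp only [IsSplitSide, SimpleGraph.side, Sym2.eq_swap (a := v'), Set.mem_ofPred_eq]
    exact ⟨hT₂v, hT₂a⟩
  rw [Set.ext hX₁T, hsplit.eq_sep_mem_side_swap hT he' hX₁T]
  obtain ⟨hx₁U, hx₁T⟩ := not_or.mp hx₁
  obtain ⟨hx₂U, hx₂T⟩ := not_or.mp hx₂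
  constructor
  · rintro ⟨fv, fe, hemb⟩
    exact ⟨hS.displays_splitSide hemb hx₁U hx₁T hU₁ hT₁,
      hS.symm.displays_splitSide hemb hx₂U hx₂T hU₂ hT₂⟩
  · rintro ⟨h₁, h₂⟩
    exact hS.displays_of_displays_splitSides hx₁U hx₁T hx₂U hx₂T hU₁ hT₁ hU₂ hT₂ h₁ h₂

/-- Let `U` be a non-simple `3`-cuttable unrooted binary phylogenetic
network on `X` and `T` an unrooted binary phylogenetic `X`-tree.  Let `e = {u, v}` be a
non-trivial cut-edge of `U` inducing the split `X₁ | X₂` (with `X₁` the side of `u`), and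
let `e' = {u', v'}` be an edge of `T` inducing the same split (with `X₁` the side of
`u'`).  Let `U₁, U₂` be obtained from `U` by deleting `e` and adding new leaf edges
`{u, x₁}` and `{v, x₂}`, where `x₁, x₂` are new labels, and let `T₁, T₂` be obtained from
`T` by deleting `e'` and adding the leaf edges `{u', x₁}` and `{v', x₂}`; here `T₁, U₁`
have leaf set `X₁ ∪ {x₁}` and `T₂, U₂` have leaf set `X₂ ∪ {x₂}`.  Then `U` displays `T`
if and only if `U₁` displays `T₁` and `U₂` displays `T₂`. -/
theorem branching_operation_displays {V : Type} [Fintype V]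
    (U T : Net V) (X : Set V) (hU : U.IsUBPN X) (h3 : U.QCuttable 3)
    (hT : T.IsTree X) (hns : ¬ U.Simple X)
    (u v : V) (he : U.IsCutEdge s(u, v)) (hu : u ∉ X) (hv : v ∉ X)
    (X₁ X₂ : Set V) (hsplit : U.InducesSplit X s(u, v) X₁ X₂)
    (hX₁U : ∀ x, x ∈ X₁ ↔ x ∈ X ∧ (U.graph.deleteEdges {s(u, v)}).Reachable u x)
    (u' v' : V) (he' : T.graph.Adj u' v')
    (hsplit' : T.InducesSplit X s(u', v') X₁ X₂)
    (hX₁T : ∀ x, x ∈ X₁ ↔ x ∈ X ∧ (T.graph.deleteEdges {s(u', v')}).Reachable u' x)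
    (x₁ x₂ : V) (hx₁ : x₁ ∉ U.verts ∪ T.verts) (hx₂ : x₂ ∉ U.verts ∪ T.verts)
    (hx₁₂ : x₁ ≠ x₂)
    (U₁ U₂ T₁ T₂ : Net V)
    (hU₁v : U₁.verts =
      {w ∈ U.verts | (U.graph.deleteEdges {s(u, v)}).Reachable u w} ∪ {x₁})
    (hU₁a : ∀ a b, U₁.graph.Adj a b ↔
      ((U.graph.Adj a b ∧ s(a, b) ≠ s(u, v) ∧
        (U.graph.deleteEdges {s(u, v)}).Reachable u a ∧
        (U.graph.deleteEdges {s(u, v)}).Reachable u b) ∨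
       (a = u ∧ b = x₁) ∨ (a = x₁ ∧ b = u)))
    (hU₂v : U₂.verts =
      {w ∈ U.verts | (U.graph.deleteEdges {s(u, v)}).Reachable v w} ∪ {x₂})
    (hU₂a : ∀ a b, U₂.graph.Adj a b ↔
      ((U.graph.Adj a b ∧ s(a, b) ≠ s(u, v) ∧
        (U.graph.deleteEdges {s(u, v)}).Reachable v a ∧
        (U.graph.deleteEdges {s(u, v)}).Reachable v b) ∨
       (a = v ∧ b = x₂) ∨ (a = x₂ ∧ b = v)))
    (hT₁v : T₁.verts =
      {w ∈ T.verts | (T.graph.deleteEdges {s(u', v')}).Reachable u' w} ∪ {x₁})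
    (hT₁a : ∀ a b, T₁.graph.Adj a b ↔
      ((T.graph.Adj a b ∧ s(a, b) ≠ s(u', v') ∧
        (T.graph.deleteEdges {s(u', v')}).Reachable u' a ∧
        (T.graph.deleteEdges {s(u', v')}).Reachable u' b) ∨
       (a = u' ∧ b = x₁) ∨ (a = x₁ ∧ b = u')))
    (hT₂v : T₂.verts =
      {w ∈ T.verts | (T.graph.deleteEdges {s(u', v')}).Reachable v' w} ∪ {x₂})
    (hT₂a : ∀ a b, T₂.graph.Adj a b ↔
      ((T.graph.Adj a b ∧ s(a, b) ≠ s(u', v') ∧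
        (T.graph.deleteEdges {s(u', v')}).Reachable v' a ∧
        (T.graph.deleteEdges {s(u', v')}).Reachable v' b) ∨
       (a = v' ∧ b = x₂) ∨ (a = x₂ ∧ b = v'))) :
    U.Displays T X ↔
      (U₁.Displays T₁ (X₁ ∪ {x₁}) ∧ U₂.Displays T₂ (X₂ ∪ {x₂})) :=
  branching_operation_displays_general U T X hU hT u v he X₁ X₂ hsplit hX₁U u' v' he' hX₁T x₁ x₂ hx₁
    hx₂ U₁ U₂ T₁ T₂ hU₁v hU₁a hU₂v hU₂a hT₁v hT₁a hT₂v hT₂a
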